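/- For two players, anonymity does not imply Mechanism Indifference: the functions on ground set {a,b} defined by f₁(x,∅)=f₂(∅,x)=1 for singletons x, f₁({a,b},∅)=f₂(∅,{a,b})=2, f₁(x,y)=f₂(x,y)=3/4 for disjoint singletons x,y (and 0 when own set is empty), are anonymous, exhibit adverse competition, and have submodular nondecreasing sum, yet f₁(a,b)+f₂(a,b) = 3/2 ≠ 2 = f₁({a,b},∅)+f₂({a,b},∅), so MeI fails. -/

import Mathlib

/-!
On disjoint allocations over `{a, b} = Fin 2` the hypotheses pin both utilities down to one table
`u S T` (own set `S`, opponent's set `T`): `0` if `S = ∅`, `#S` if `T = ∅`, and `3/4` otherwise,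
with `f₁ S T = u S T` and `f₂ S T = u T S`. Every claimed property is then a finite check on
rational values of `u`, transported to `ℝ` along the cast. Mechanism Indifference fails because
splitting `{a, b}` between the players destroys a quarter of each singleton's value.
-/

open Finset

def exampleUtility (S T : Finset (Fin 2)) : ℚ :=
  if S = ∅ then 0 else if T = ∅ then #S else 3 / 4

def exampleWelfare (S T : Finset (Fin 2)) : ℚ :=
  exampleUtility S T + exampleUtility T S

theorem Finset.fin_two_cases (S : Finset (Fin 2)) :
    S = ∅ ∨ S = {0} ∨ S = {1} ∨ S = univ := by
  revert S; decide

theorem eq_exampleUtility_of_disjoint {f : Finset (Fin 2) → Finset (Fin 2) → ℝ}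
    (h_empty : ∀ T, f ∅ T = 0) (h_single : ∀ x, f {x} ∅ = 1) (h_univ : f univ ∅ = 2)
    (h_pair : ∀ x y, x ≠ y → f {x} {y} = 3 / 4) {S T : Finset (Fin 2)} (h : Disjoint S T) :
    f S T = exampleUtility S T := by
  rcases S.fin_two_cases with rfl | rfl | rfl | rfl <;>
    rcases T.fin_two_cases with rfl | rfl | rfl | rfl <;>
    first
    | (exfalso; revert h; decide)
    | simp [exampleUtility, univ_nonempty.ne_empty, h_empty, h_single, h_univ, h_pair]

theorem exampleUtility_antitone_right :
    ∀ ⦃S T T' : Finset (Fin 2)⦄, T ⊆ T' → Disjoint S T' →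
      exampleUtility S T' ≤ exampleUtility S T := by
  decide +kernel

theorem exampleWelfare_comm (S T : Finset (Fin 2)) : exampleWelfare S T = exampleWelfare T S :=
  add_comm _ _

theorem exampleWelfare_mono_left :
    ∀ ⦃S S' T : Finset (Fin 2)⦄, S ⊆ S' → Disjoint S' T →
      exampleWelfare S T ≤ exampleWelfare S' T := by
  decide +kernel

theorem exampleWelfare_submodular_left :
    ∀ ⦃S S' T : Finset (Fin 2)⦄, S ⊆ S' → ∀ e, Disjoint (insert e S') T →
      exampleWelfare (insert e S') T - exampleWelfare S' T ≤
        exampleWelfare (insert e S) T - exampleWelfare S T := by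
  decide +kernel

section RealWelfare

variable {w : Finset (Fin 2) → Finset (Fin 2) → ℝ}
  (hw : ∀ S T, Disjoint S T → w S T = exampleWelfare S T)
include hw

theorem mono_left_of_eq_exampleWelfare {S S' T : Finset (Fin 2)} (hS : S ⊆ S')
    (h : Disjoint S' T) : w S T ≤ w S' T := by
  rw [hw _ _ h, hw _ _ (h.mono_left hS)]
  exact_mod_cast exampleWelfare_mono_left hS h

theorem submodular_left_of_eq_exampleWelfare {S S' T : Finset (Fin 2)} (hS : S ⊆ S') (e : Fin 2)
    (h : Disjoint (insert e S') T) :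
    w (insert e S') T - w S' T ≤ w (insert e S) T - w S T := by
  have h' : Disjoint S' T := h.mono_left (subset_insert e S')
  rw [hw _ _ h, hw _ _ h', hw _ _ (h.mono_left (insert_subset_insert e hS)),
    hw _ _ (h'.mono_left hS)]
  exact_mod_cast exampleWelfare_submodular_left hS e h

theorem mono_right_of_eq_exampleWelfare {S T T' : Finset (Fin 2)} (hT : T ⊆ T')
    (h : Disjoint S T') : w S T ≤ w S T' :=
  mono_left_of_eq_exampleWelfare (w := fun T S => w S T)
    (fun T S h => by rw [hw S T h.symm, exampleWelfare_comm]) hT h.symm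

theorem submodular_right_of_eq_exampleWelfare {S T T' : Finset (Fin 2)} (hT : T ⊆ T') (e : Fin 2)
    (h : Disjoint S (insert e T')) :
    w S (insert e T') - w S T' ≤ w S (insert e T) - w S T :=
  submodular_left_of_eq_exampleWelfare (w := fun T S => w S T)
    (fun T S h => by rw [hw S T h.symm, exampleWelfare_comm]) hT e h.symm

end RealWelfare

/-- For two players, anonymity does not imply Mechanism Indifference.
On ground set `{a,b} = Fin 2`, the utilities with `f₁(x,∅)=f₂(∅,x)=1` for singletons,
`f₁({a,b},∅)=f₂(∅,{a,b})=2`, `f₁(x,y)=f₂(x,y)=3/4` for disjoint singletons, and `0`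
when the player's own set is empty, are anonymous, exhibit adverse competition, and
have nondecreasing submodular sum, yet
`f₁(a,b)+f₂(a,b) = 3/2 ≠ 2 = f₁({a,b},∅)+f₂({a,b},∅)`: MeI fails. -/
theorem stmt14 (f₁ f₂ : Finset (Fin 2) → Finset (Fin 2) → ℝ)
    (h1e : ∀ T, f₁ ∅ T = 0) (h2e : ∀ S, f₂ S ∅ = 0)
    (h1s : ∀ x : Fin 2, f₁ {x} ∅ = 1) (h2s : ∀ x : Fin 2, f₂ ∅ {x} = 1)
    (h1f : f₁ Finset.univ ∅ = 2) (h2f : f₂ ∅ Finset.univ = 2)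
    (h1xy : ∀ x y : Fin 2, x ≠ y → f₁ {x} {y} = 3 / 4)
    (h2xy : ∀ x y : Fin 2, x ≠ y → f₂ {x} {y} = 3 / 4) :
    -- anonymity
    (∀ S T : Finset (Fin 2), Disjoint S T → f₁ S T = f₂ T S) ∧
    -- adverse competition
    (∀ S T T' : Finset (Fin 2), T ⊆ T' → Disjoint S T' → f₁ S T' ≤ f₁ S T) ∧
    (∀ S S' T : Finset (Fin 2), S ⊆ S' → Disjoint S' T → f₂ S' T ≤ f₂ S T) ∧
    -- the welfare f₁ + f₂ is nondecreasing in each player's set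
    (∀ S S' T : Finset (Fin 2), S ⊆ S' → Disjoint S' T →
      f₁ S T + f₂ S T ≤ f₁ S' T + f₂ S' T) ∧
    (∀ S T T' : Finset (Fin 2), T ⊆ T' → Disjoint S T' →
      f₁ S T + f₂ S T ≤ f₁ S T' + f₂ S T') ∧
    -- the welfare f₁ + f₂ is submodular in each player's set
    (∀ S S' T : Finset (Fin 2), S ⊆ S' → ∀ e, Disjoint (insert e S') T →
      (f₁ (insert e S') T + f₂ (insert e S') T) - (f₁ S' T + f₂ S' T) ≤
      (f₁ (insert e S) T + f₂ (insert e S) T) - (f₁ S T + f₂ S T)) ∧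
    (∀ S T T' : Finset (Fin 2), T ⊆ T' → ∀ e, Disjoint S (insert e T') →
      (f₁ S (insert e T') + f₂ S (insert e T')) - (f₁ S T' + f₂ S T') ≤
      (f₁ S (insert e T) + f₂ S (insert e T)) - (f₁ S T + f₂ S T)) ∧
    -- Mechanism Indifference fails: two disjoint allocations with the same union
    -- yield different welfare
    f₁ {0} {1} + f₂ {0} {1} = 3 / 2 ∧
    f₁ Finset.univ ∅ + f₂ Finset.univ ∅ = 2 ∧
    f₁ {0} {1} + f₂ {0} {1} ≠ f₁ Finset.univ ∅ + f₂ Finset.univ ∅ := by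
  have e₁ {S T : Finset (Fin 2)} (h : Disjoint S T) : f₁ S T = exampleUtility S T :=
    eq_exampleUtility_of_disjoint h1e h1s h1f h1xy h
  have e₂ {S T : Finset (Fin 2)} (h : Disjoint S T) : f₂ S T = exampleUtility T S :=
    eq_exampleUtility_of_disjoint (f := fun S T => f₂ T S) h2e h2s h2f
      (fun x y hxy => h2xy y x hxy.symm) h.symm
  have hw : ∀ S T, Disjoint S T → f₁ S T + f₂ S T = exampleWelfare S T := fun S T h => by
    rw [e₁ h, e₂ h, exampleWelfare]; push_cast; rfl
  have split : f₁ {0} {1} + f₂ {0} {1} = 3 / 2 := by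
    rw [hw _ _ (by decide)]; norm_num [exampleWelfare, exampleUtility]
  have whole : f₁ univ ∅ + f₂ univ ∅ = 2 := by
    rw [hw _ _ (disjoint_empty_right _)]
    norm_num [exampleWelfare, exampleUtility, univ_nonempty.ne_empty]
  refine ⟨fun S T h => by rw [e₁ h, e₂ h.symm], fun S T T' hT h => ?_, fun S S' T hS h => ?_,
    fun S S' T => mono_left_of_eq_exampleWelfare hw,
    fun S T T' => mono_right_of_eq_exampleWelfare hw,
    fun S S' T => submodular_left_of_eq_exampleWelfare hw,
    fun S T T' => submodular_right_of_eq_exampleWelfare hw,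
    split, whole, by rw [split, whole]; norm_num⟩
  · rw [e₁ h, e₁ (h.mono_right hT)]
    exact_mod_cast exampleUtility_antitone_right hT h
  · rw [e₂ h, e₂ (h.mono_left hS)]
    exact_mod_cast exampleUtility_antitone_right hS h.symm
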